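/- Let X be an isotropic Gaussian random vector on ℝⁿ with law N(μ, σ²Iₙ), and let W be a real m×n matrix with Moore–Penrose pseudo-inverse W† defined via a singular value decomposition. Set Z := W X and X⊥ := (Iₙ − W†W) X. Then for almost every realization z of Z, the conditional distribution of X given Z = z equals the law of X⊥ translated by the constant vector W† z; that is, the conditional distribution kernel of X given Z applied at z is the pushforward of the law of X⊥ under the map v ↦ v + W† z. -/

import Mathlib

open Matrix MeasureTheory ProbabilityTheory Classical

/-- The multivariate Gaussian measure on `ℝⁿ` with mean `m` and (positive semidefinite)
covariance matrix `S`: the pushforward of a vector of `n` i.i.d. standard Gaussians under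
`x ↦ m + √S x`, where `√S` is the positive semidefinite square root of `S`.
(Junk value `0` if `S` is not positive semidefinite.) -/
noncomputable def multiGaussian {n : ℕ} (m : Fin n → ℝ) (S : Matrix (Fin n) (Fin n) ℝ) :
    Measure (Fin n → ℝ) :=
  if hS : S.PosSemidef then
    Measure.map (fun x => m + (hS.1.eigenvectorUnitary.1 *
      diagonal ((√·) ∘ hS.1.eigenvalues) *
      (star hS.1.eigenvectorUnitary : Matrix (Fin n) (Fin n) ℝ)).mulVec x)
      (Measure.pi fun _ : Fin n => gaussianReal 0 1)
  else 0

/-! Put `Z = W X` and `X⊥ = (I - W†W) X`, so that `X = X⊥ + W† Z`. The pair `(Z, X⊥)` is a linear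
image of the Gaussian vector `X`, hence jointly Gaussian, with cross-covariance
`σ² W (I - W†W)ᵀ = σ² (W - W W† W) = 0` by the Penrose identities `W W† W = W` and
`(W†W)ᵀ = W†W`, which the SVD formula for `W†` satisfies. Uncorrelated jointly Gaussian vectors
are independent, and conditioning `X⊥ + W† Z` on the independent `Z = z` merely translates the law
of `X⊥` by `W† z`. -/

open WithLp
open scoped MatrixOrder RealInnerProductSpace

section PseudoInverse

variable {m n : ℕ} {D : Matrix (Fin m) (Fin n) ℝ} {Ddag : Matrix (Fin n) (Fin m) ℝ}

lemma isDiag_pinv_mul_of_diag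
    (hD_off : ∀ (i : Fin m) (j : Fin n), (i : ℕ) ≠ (j : ℕ) → D i j = 0)
    (hDdag_off : ∀ (i : Fin n) (j : Fin m), (i : ℕ) ≠ (j : ℕ) → Ddag i j = 0) :
    (Ddag * D).IsDiag := by
  intro i j hij
  rw [mul_apply]
  refine Finset.sum_eq_zero fun k _ => ?_
  by_cases hik : (i : ℕ) = k
  · rw [hD_off k j fun hkj => hij (Fin.ext (hik.trans hkj)), mul_zero]
  · rw [hDdag_off i k hik, zero_mul]

lemma pinv_mul_apply_self_of_diag
    (hD_off : ∀ (i : Fin m) (j : Fin n), (i : ℕ) ≠ (j : ℕ) → D i j = 0)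
    (hDdag_off : ∀ (i : Fin n) (j : Fin m), (i : ℕ) ≠ (j : ℕ) → Ddag i j = 0)
    (hDdag_diag : ∀ (i : Fin n) (j : Fin m), (i : ℕ) = (j : ℕ) →
      Ddag i j = if D j i = 0 then 0 else (D j i)⁻¹)
    {j : Fin m} {i : Fin n} (hji : D j i ≠ 0) :
    (Ddag * D) i i = 1 := by
  have hji_eq : (j : ℕ) = i := by_contra fun h => hji (hD_off j i h)
  rw [mul_apply, Finset.sum_eq_single j]
  · rw [hDdag_diag i j hji_eq.symm, if_neg hji, inv_mul_cancel₀ hji]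
  · intro k _ hkj
    rw [hDdag_off i k fun hik => hkj (Fin.ext (hik.symm.trans hji_eq.symm)), zero_mul]
  · simp

lemma mul_pinv_mul_of_diag
    (hD_off : ∀ (i : Fin m) (j : Fin n), (i : ℕ) ≠ (j : ℕ) → D i j = 0)
    (hDdag_off : ∀ (i : Fin n) (j : Fin m), (i : ℕ) ≠ (j : ℕ) → Ddag i j = 0)
    (hDdag_diag : ∀ (i : Fin n) (j : Fin m), (i : ℕ) = (j : ℕ) →
      Ddag i j = if D j i = 0 then 0 else (D j i)⁻¹) :
    D * (Ddag * D) = D := by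
  ext j i
  rw [mul_apply, Finset.sum_eq_single i]
  · by_cases hji : D j i = 0
    · rw [hji, zero_mul]
    · rw [pinv_mul_apply_self_of_diag hD_off hDdag_off hDdag_diag hji, mul_one]
  · intro k _ hki
    rw [isDiag_pinv_mul_of_diag hD_off hDdag_off hki, mul_zero]
  · simp

end PseudoInverse

lemma mul_transpose_one_sub_mul_eq_zero_of_svd {m n : ℕ} {W : Matrix (Fin m) (Fin n) ℝ}
    {Wdag : Matrix (Fin n) (Fin m) ℝ} {U : Matrix (Fin m) (Fin m) ℝ} {V : Matrix (Fin n) (Fin n) ℝ}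
    {D : Matrix (Fin m) (Fin n) ℝ} {Ddag : Matrix (Fin n) (Fin m) ℝ}
    (hU : Uᵀ * U = 1) (hV : Vᵀ * V = 1) (hW : W = U * D * Vᵀ) (hWdag : Wdag = V * Ddag * Uᵀ)
    (hDDdagD : D * (Ddag * D) = D) (hsymm : (Ddag * D).IsSymm) :
    W * (1 - Wdag * W)ᵀ = 0 := by
  have hproj : Wdag * W = V * (Ddag * D) * Vᵀ := by
    rw [hWdag, hW]
    simp only [Matrix.mul_assoc]
    rw [← Matrix.mul_assoc Uᵀ U, hU, Matrix.one_mul]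
  have hproj_symm : (Wdag * W)ᵀ = Wdag * W := by
    rw [hproj, transpose_mul, transpose_mul, transpose_transpose, hsymm.eq]
    simp only [Matrix.mul_assoc]
  have hWWdagW : W * (Wdag * W) = W := by
    calc W * (Wdag * W) = U * D * Vᵀ * (V * (Ddag * D) * Vᵀ) := by rw [hproj, hW]
      _ = U * (D * (Ddag * D)) * Vᵀ := by
        simp only [Matrix.mul_assoc]
        rw [← Matrix.mul_assoc Vᵀ V, hV, Matrix.one_mul]
      _ = W := by rw [hDDdagD, hW]
  rw [transpose_sub, transpose_one, hproj_symm, Matrix.mul_sub, Matrix.mul_one, hWWdagW, sub_self]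

lemma multiGaussian_eq_map_ofLp {n : ℕ} (m : Fin n → ℝ) {S : Matrix (Fin n) (Fin n) ℝ}
    (hS : S.PosSemidef) :
    multiGaussian m S = (multivariateGaussian (toLp 2 m) S).map ofLp := by
  rw [multiGaussian, dif_pos hS, multivariateGaussian, ← map_pi_eq_stdGaussian,
    Measure.map_map (by fun_prop) (by fun_prop), Measure.map_map (by fun_prop) (by fun_prop)]
  congr 1
  funext x
  have hsqrt : CFC.sqrt S = hS.1.cfc Real.sqrt := by
    rw [CFC.sqrt_eq_real_sqrt S hS.nonneg, cfcₙ_eq_cfc, hS.1.cfc_eq]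
  simp [hsqrt, IsHermitian.cfc, Function.comp_def, Matrix.mul_assoc]

section GaussianVector

variable {Ω : Type*} [MeasurableSpace Ω] {P : Measure Ω} {n : ℕ} {X : Ω → Fin n → ℝ}
  {μ : Fin n → ℝ} {S : Matrix (Fin n) (Fin n) ℝ}

lemma hasGaussianLaw_of_map_eq_multiGaussian (hS : S.PosSemidef)
    (hlaw : P.map X = multiGaussian μ S) : HasGaussianLaw X P where
  isGaussian_map := by
    rw [hlaw, multiGaussian_eq_map_ofLp μ hS]
    exact isGaussian_map_equiv (PiLp.continuousLinearEquiv 2 ℝ fun _ : Fin n => ℝ)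

lemma covariance_mulVec_of_map_eq_multiGaussian [IsProbabilityMeasure P] (hX : Measurable X)
    (hS : S.PosSemidef) (hlaw : P.map X = multiGaussian μ S) {k l : ℕ}
    (M : Matrix (Fin k) (Fin n) ℝ) (N : Matrix (Fin l) (Fin n) ℝ) (i : Fin k) (j : Fin l) :
    cov[fun ω => (M *ᵥ X ω) i, fun ω => (N *ᵥ X ω) j; P] = (M * S * Nᵀ) i j := by
  have hrow : ∀ {k : ℕ} (M : Matrix (Fin k) (Fin n) ℝ) (i : Fin k),
      (fun ω => (M *ᵥ X ω) i) =
        (fun z : EuclideanSpace ℝ (Fin n) => ⟪toLp 2 (M i), z⟫) ∘ toLp 2 ∘ X := by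
    intro k M i
    funext ω
    simp [Matrix.mulVec, dotProduct, PiLp.inner_apply, mul_comm]
  rw [hrow, hrow, ← Function.comp_assoc, ← Function.comp_assoc,
    ← covariance_map (by fun_prop) (by fun_prop) hX.aemeasurable, hlaw,
    multiGaussian_eq_map_ofLp μ hS, covariance_map (by fun_prop) (by fun_prop) (by fun_prop)]
  simp only [Function.comp_def, toLp_ofLp]
  rw [← covarianceBilin_apply_eq_cov IsGaussian.memLp_two_id,
    covarianceBilin_multivariateGaussian hS, ofLp_toLp, ofLp_toLp, dotProduct_mulVec, mul_apply']
  rfl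

lemma indepFun_mulVec_of_map_eq_multiGaussian [IsProbabilityMeasure P] (hX : Measurable X)
    (hS : S.PosSemidef) (hlaw : P.map X = multiGaussian μ S) {k l : ℕ}
    (M : Matrix (Fin k) (Fin n) ℝ) (N : Matrix (Fin l) (Fin n) ℝ) (hMN : M * S * Nᵀ = 0) :
    IndepFun (fun ω => M *ᵥ X ω) (fun ω => N *ᵥ X ω) P := by
  have hpair : HasGaussianLaw (fun ω => (M *ᵥ X ω, N *ᵥ X ω)) P :=
    (hasGaussianLaw_of_map_eq_multiGaussian hS hlaw).map_fun
      ((Matrix.toLin' M).toContinuousLinearMap.prod (Matrix.toLin' N).toContinuousLinearMap)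
  refine hpair.indepFun_of_covariance_eval (X := fun i ω => (M *ᵥ X ω) i)
    (Y := fun j ω => (N *ᵥ X ω) j) fun i j => ?_
  rw [covariance_mulVec_of_map_eq_multiGaussian hX hS hlaw, hMN, Matrix.zero_apply]

end GaussianVector

lemma ProbabilityTheory.IndepFun.condDistrib_add_comp_ae_eq {Ω β E : Type*}
    [MeasurableSpace Ω] [MeasurableSpace β] [MeasurableSpace E] [StandardBorelSpace E]
    [Nonempty E] [Add E] [MeasurableAdd₂ E]
    {P : Measure Ω} [IsFiniteMeasure P] {Z : Ω → β} {Y : Ω → E} {f : β → E}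
    (hZY : IndepFun Z Y P) (hZ : Measurable Z) (hY : Measurable Y) (hf : Measurable f) :
    ∀ᵐ z ∂P.map Z, condDistrib (fun ω => Y ω + f (Z ω)) Z P z = (P.map Y).map (· + f z) := by
  set ν := P.map Y
  let κ : Kernel β E := (Kernel.const β ν ×ₖ Kernel.deterministic f hf).map fun p => p.1 + p.2
  have hκ : ∀ z, κ z = ν.map (· + f z) := fun z => by
    rw [Kernel.map_apply _ (by fun_prop), Kernel.prod_apply, Kernel.const_apply,
      Kernel.deterministic_apply, Measure.prod_dirac, Measure.map_map (by fun_prop) (by fun_prop)]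
    rfl
  have hjoint : P.map (fun ω => (Z ω, Y ω + f (Z ω))) = P.map Z ⊗ₘ κ := by
    have hT : Measurable fun q : β × E => (q.1, q.2 + f q.1) := by fun_prop
    have hcomp : (fun ω => (Z ω, Y ω + f (Z ω))) =
        (fun q : β × E => (q.1, q.2 + f q.1)) ∘ fun ω => (Z ω, Y ω) := rfl
    ext s hs
    rw [Measure.compProd_apply hs, hcomp, ← Measure.map_map hT (hZ.prodMk hY),
      (indepFun_iff_map_prod_eq_prod_map_map hZ.aemeasurable hY.aemeasurable).1 hZY,
      Measure.map_apply hT hs, Measure.prod_apply (hT hs)]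
    refine lintegral_congr fun z => ?_
    rw [hκ, Measure.map_apply (by fun_prop) (measurable_prodMk_left hs)]
    rfl
  filter_upwards [condDistrib_ae_eq_of_measure_eq_compProd_of_measurable hZ (by fun_prop) hjoint]
    with z hz
  rw [hz, hκ]

theorem condDistrib_eq_translated_perp_general {Ω : Type*} [MeasurableSpace Ω]
    (Pr : Measure Ω) [IsProbabilityMeasure Pr]
    {n m : ℕ} (μ : Fin n → ℝ) (σ : ℝ)
    (X : Ω → Fin n → ℝ) (hX : Measurable X)
    (hlaw : Measure.map X Pr = multiGaussian μ (σ ^ 2 • (1 : Matrix (Fin n) (Fin n) ℝ)))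
    (W : Matrix (Fin m) (Fin n) ℝ) (Wdag : Matrix (Fin n) (Fin m) ℝ)
    (U : Matrix (Fin m) (Fin m) ℝ) (V : Matrix (Fin n) (Fin n) ℝ)
    (D : Matrix (Fin m) (Fin n) ℝ) (Ddag : Matrix (Fin n) (Fin m) ℝ)
    (hU : Uᵀ * U = 1) (hV : Vᵀ * V = 1)
    (hD_off : ∀ (i : Fin m) (j : Fin n), (i : ℕ) ≠ (j : ℕ) → D i j = 0)
    (hDdag_off : ∀ (i : Fin n) (j : Fin m), (i : ℕ) ≠ (j : ℕ) → Ddag i j = 0)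
    (hDdag_diag : ∀ (i : Fin n) (j : Fin m), (i : ℕ) = (j : ℕ) →
      Ddag i j = if D j i = 0 then 0 else (D j i)⁻¹)
    (hW : W = U * D * Vᵀ) (hWdag : Wdag = V * Ddag * Uᵀ) :
    ∀ᵐ z ∂(Measure.map (fun ω => W.mulVec (X ω)) Pr),
      condDistrib X (fun ω => W.mulVec (X ω)) Pr z
        = Measure.map (fun v => v + Wdag.mulVec z)
            (Measure.map (fun ω => ((1 : Matrix (Fin n) (Fin n) ℝ) - Wdag * W).mulVec (X ω))
              Pr) := by
  have hS : (σ ^ 2 • (1 : Matrix (Fin n) (Fin n) ℝ)).PosSemidef :=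
    PosSemidef.one.smul (sq_nonneg σ)
  have horth : W * (1 - Wdag * W)ᵀ = 0 :=
    mul_transpose_one_sub_mul_eq_zero_of_svd hU hV hW hWdag
      (mul_pinv_mul_of_diag hD_off hDdag_off hDdag_diag)
      (isDiag_pinv_mul_of_diag hD_off hDdag_off).isSymm
  have hindep : IndepFun (fun ω => W *ᵥ X ω) (fun ω => (1 - Wdag * W) *ᵥ X ω) Pr :=
    indepFun_mulVec_of_map_eq_multiGaussian hX hS hlaw W _ <| by
      rw [Matrix.mul_smul, Matrix.mul_one, Matrix.smul_mul, horth, smul_zero]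
  have hdecomp : X = fun ω => (1 - Wdag * W) *ᵥ X ω + Wdag *ᵥ (W *ᵥ X ω) := by
    funext ω
    rw [sub_mulVec, one_mulVec, mulVec_mulVec, sub_add_cancel]
  have h := hindep.condDistrib_add_comp_ae_eq (f := (Wdag *ᵥ ·))
    (by fun_prop) (by fun_prop) (by fun_prop)
  rwa [← hdecomp] at h

/-- If `X ~ N(μ, σ²Iₙ)`, `Z = W X` and `X⊥ = (Iₙ - W†W) X`, then for almost every
realization `z` of `Z`, the conditional distribution of `X` given `Z = z` is the law of
`X⊥` translated by `W† z`. -/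
theorem condDistrib_eq_translated_perp {Ω : Type*} [MeasurableSpace Ω]
    (Pr : Measure Ω) [IsProbabilityMeasure Pr]
    {n m : ℕ} (hn : 1 ≤ n) (hm : 1 ≤ m) (μ : Fin n → ℝ) (σ : ℝ) (hσ : 0 < σ)
    (X : Ω → Fin n → ℝ) (hX : Measurable X)
    (hlaw : Measure.map X Pr = multiGaussian μ (σ ^ 2 • (1 : Matrix (Fin n) (Fin n) ℝ)))
    (W : Matrix (Fin m) (Fin n) ℝ) (Wdag : Matrix (Fin n) (Fin m) ℝ)
    (U : Matrix (Fin m) (Fin m) ℝ) (V : Matrix (Fin n) (Fin n) ℝ)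
    (D : Matrix (Fin m) (Fin n) ℝ) (Ddag : Matrix (Fin n) (Fin m) ℝ)
    (hU : Uᵀ * U = 1) (hV : Vᵀ * V = 1)
    (hD_off : ∀ (i : Fin m) (j : Fin n), (i : ℕ) ≠ (j : ℕ) → D i j = 0)
    (hD_nonneg : ∀ (i : Fin m) (j : Fin n), (i : ℕ) = (j : ℕ) → 0 ≤ D i j)
    (hDdag_off : ∀ (i : Fin n) (j : Fin m), (i : ℕ) ≠ (j : ℕ) → Ddag i j = 0)
    (hDdag_diag : ∀ (i : Fin n) (j : Fin m), (i : ℕ) = (j : ℕ) →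
      Ddag i j = if D j i = 0 then 0 else (D j i)⁻¹)
    (hW : W = U * D * Vᵀ) (hWdag : Wdag = V * Ddag * Uᵀ) :
    ∀ᵐ z ∂(Measure.map (fun ω => W.mulVec (X ω)) Pr),
      condDistrib X (fun ω => W.mulVec (X ω)) Pr z
        = Measure.map (fun v => v + Wdag.mulVec z)
            (Measure.map (fun ω => ((1 : Matrix (Fin n) (Fin n) ℝ) - Wdag * W).mulVec (X ω))
              Pr) :=
  condDistrib_eq_translated_perp_general Pr μ σ X hX hlaw W Wdag U V D Ddag hU hV hD_off hDdag_off
    hDdag_diag hW hWdag
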